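/- If V is a finite subset of ℝ², then tconv(convexHull(V)) = convexHull(tconv(V)). -/

import Mathlib

/-- A set `U ⊆ ℝ^n` is tropically convex (min-plus convention). -/
def TropConvex {n : ℕ} (U : Set (Fin n → ℝ)) : Prop :=
  ∀ x ∈ U, ∀ y ∈ U, ∀ a b : ℝ, min a b = 0 →
    (fun i => min (a + x i) (b + y i)) ∈ U

/-- The tropical convex hull: the intersection of all tropically convex sets containing `U`. -/
def tconv {n : ℕ} (U : Set (Fin n → ℝ)) : Set (Fin n → ℝ) :=
  ⋂₀ {V | TropConvex V ∧ U ⊆ V}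

/-! The inclusion `convexHull (tconv V) ⊆ tconv (convexHull V)` holds in every dimension: a point
of `tconv V` is a normalized tropical combination `min_v (l v + v)` of the points of `V`, and
averaging such representations coordinate by coordinate writes a convex combination of them as a
tropical combination of `n + 1` points of `convexHull V` (the averaged minimizers of each
coordinate, plus the averaged points with coefficient `0`).

For the converse it suffices that `convexHull (tconv V)` is tropically convex, and this is where
the plane is used. Given `x`, `y` in it and `t ≥ 0`, every linear functional takes at one of `x`,
`y`, the coordinatewise minimum of `V`, or the points `(max X, max X - max (X - Y))` and
`(max Y - max (Y - X), max Y)` of `tconv V` (maxima over `V`), a value at most its value at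
`min (t + x) y`. Separation by Hahn–Banach in the hull of finitely many of these points then puts
`min (t + x) y` in `convexHull (tconv V)`. -/

namespace Finset

variable {ι α : Type*}

theorem inf'_min_distrib [LinearOrder α] (s : Finset ι) (hs : s.Nonempty) (f g : ι → α) :
    s.inf' hs (fun i => min (f i) (g i)) = min (s.inf' hs f) (s.inf' hs g) :=
  eq_of_forall_le_iff fun c => by simp [le_inf'_iff, forall_and]

theorem add_inf' (s : Finset ι) (hs : s.Nonempty) (f : ι → ℝ) (a : ℝ) :
    a + s.inf' hs f = s.inf' hs fun i => a + f i :=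
  map_finset_inf' (OrderIso.addLeft a) hs f

end Finset

open Finset

variable {n : ℕ}

theorem tropConvex_of_forall_min_add_mem {U : Set (Fin n → ℝ)}
    (h : ∀ x ∈ U, ∀ y ∈ U, ∀ t : ℝ, 0 ≤ t → (fun j => min (t + x j) (y j)) ∈ U) :
    TropConvex U := by
  intro x hx y hy a b hab
  rcases min_choice a b with hmin | hmin
  · obtain rfl : a = 0 := hmin ▸ hab
    simpa [min_comm] using h y hy x hx b (hab ▸ min_le_right 0 b)
  · obtain rfl : b = 0 := hmin ▸ hab
    simpa using h x hx y hy a (hab ▸ min_le_left a 0)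

theorem tropConvex_tconv (U : Set (Fin n → ℝ)) : TropConvex (tconv U) :=
  fun x hx y hy a b hab T hT => hT.1 x (hx T hT) y (hy T hT) a b hab

theorem subset_tconv (U : Set (Fin n → ℝ)) : U ⊆ tconv U :=
  fun _ hz => Set.mem_sInter.2 fun _ hT => hT.2 hz

theorem tconv_min {U T : Set (Fin n → ℝ)} (hT : TropConvex T) (hUT : U ⊆ T) : tconv U ⊆ T :=
  Set.sInter_subset_of_mem ⟨hT, hUT⟩

theorem tconv_empty : tconv (∅ : Set (Fin n → ℝ)) = ∅ :=
  Set.subset_empty_iff.1 (tconv_min (fun _ h => h.elim) subset_rfl)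

noncomputable def tropComb {ι : Type*} (s : Finset ι) (hs : s.Nonempty) (l : ι → ℝ)
    (p : ι → Fin n → ℝ) : Fin n → ℝ :=
  fun j => s.inf' hs fun i => l i + p i j

theorem TropConvex.tropComb_mem {ι : Type*} {T : Set (Fin n → ℝ)} (hT : TropConvex T)
    {s : Finset ι} (hs : s.Nonempty) {p : ι → Fin n → ℝ} (hp : ∀ i ∈ s, p i ∈ T) {l : ι → ℝ}
    (hl : s.inf' hs l = 0) : tropComb s hs l p ∈ T := by
  induction hs using Finset.Nonempty.cons_induction generalizing l with
  | singleton i =>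
    convert hp i (mem_singleton_self i) using 1
    ext j
    simp [tropComb, ← hl]
  | cons i s hi hs ih =>
    set m := s.inf' hs l
    have hrest := ih (fun k hk => hp k (mem_cons_of_mem hk)) (l := fun k => -m + l k)
      (by rw [← add_inf', neg_add_cancel])
    rw [inf'_cons] at hl
    convert hT _ (hp i (mem_cons_self i s)) _ hrest (l i) m hl using 1
    ext j
    simp only [tropComb, add_inf', ← add_assoc, add_neg_cancel, zero_add]
    exact inf'_cons hs _

noncomputable def tropSpan (F : Finset (Fin n → ℝ)) (hF : F.Nonempty) : Set (Fin n → ℝ) :=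
  {z | ∃ l, F.inf' hF l = 0 ∧ tropComb F hF l id = z}

theorem tropConvex_tropSpan (F : Finset (Fin n → ℝ)) (hF : F.Nonempty) :
    TropConvex (tropSpan F hF) := by
  rintro _ ⟨l, hl, rfl⟩ _ ⟨l', hl', rfl⟩ a b hab
  refine ⟨fun w => min (a + l w) (b + l' w), ?_, ?_⟩
  · rw [inf'_min_distrib, ← add_inf', ← add_inf', hl, hl', add_zero, add_zero, hab]
  · ext j
    simp only [tropComb, id, add_inf', ← inf'_min_distrib, ← add_assoc, ← min_add_add_right]

theorem subset_tropSpan (F : Finset (Fin n → ℝ)) (hF : F.Nonempty) : ↑F ⊆ tropSpan F hF := by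
  intro v hv
  -- `dist` on `Fin n → ℝ` is the sup distance, so `l := dist v` satisfies `l w + w ≥ v`.
  have hle : ∀ w j, v j ≤ dist v w + w j := fun w j => by
    have := (Real.dist_eq (v j) (w j)).symm.trans_le (dist_le_pi_dist v w j)
    linarith [le_abs_self (v j - w j)]
  refine ⟨fun w => dist v w,
    le_antisymm ((inf'_le _ hv).trans_eq (dist_self v)) (le_inf' _ _ fun w _ => dist_nonneg), ?_⟩
  ext j
  exact le_antisymm ((inf'_le _ hv).trans_eq (by simp)) (le_inf' _ _ fun w _ => hle w j)

theorem sum_smul_tropComb_apply_le {ι : Type*} [Fintype ι] (F : Finset (Fin n → ℝ))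
    (hF : F.Nonempty) {w : ι → ℝ} (hw : ∀ i, 0 ≤ w i) (l : ι → (Fin n → ℝ) → ℝ)
    {b : ι → Fin n → ℝ} (hb : ∀ i, b i ∈ F) (k : Fin n) :
    (∑ i, w i • tropComb F hF (l i) id) k ≤ ∑ i, w i * l i (b i) + (∑ i, w i • b i) k := by
  simp only [Finset.sum_apply, Pi.smul_apply, smul_eq_mul, ← Finset.sum_add_distrib, ← mul_add]
  exact sum_le_sum fun i _ => mul_le_mul_of_nonneg_left (inf'_le _ (hb i)) (hw i)

theorem convexHull_tropSpan_subset (F : Finset (Fin n → ℝ)) (hF : F.Nonempty) :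
    convexHull ℝ (tropSpan F hF) ⊆ tconv (convexHull ℝ ↑F) := by
  intro p hp
  obtain ⟨ι, _, w, z, hw0, hw1, hz, rfl⟩ := mem_convexHull_iff_exists_fintype.1 hp
  choose l hl hlz using hz
  obtain rfl : z = fun i => tropComb F hF (l i) id := funext fun i => (hlz i).symm
  have hl0 : ∀ i, ∀ v ∈ F, 0 ≤ l i v := fun i v hv => hl i ▸ inf'_le _ hv
  choose c hcF hc using fun i => F.exists_mem_eq_inf' hF (l i)
  choose a haF ha using fun i (j : Fin n) => F.exists_mem_eq_inf' hF fun v => l i v + v j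
  -- Index `none` carries the zero-coefficient points `c i`, index `some j` the minimizers of
  -- coordinate `j`; averaging over `i` gives the `n + 1` points of the tropical combination.
  let b : ι → Option (Fin n) → Fin n → ℝ := fun i o => o.elim (c i) (a i)
  have hbF : ∀ i o, b i o ∈ F := fun i o => o.rec (hcF i) (haF i)
  let L : Option (Fin n) → ℝ := fun o => ∑ i, w i * l i (b i o)
  have hL : univ.inf' univ_nonempty L = 0 := by
    refine le_antisymm (inf'_le_of_le _ (mem_univ none) ?_) ?_
    · simp [L, b, ← hc, hl]
    · exact le_inf' _ _ fun o _ => sum_nonneg fun i _ => mul_nonneg (hw0 i) (hl0 i _ (hbF i o))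
  convert (tropConvex_tconv _).tropComb_mem univ_nonempty (p := fun o => ∑ i, w i • b i o)
    (fun o _ => subset_tconv _ (mem_convexHull_of_exists_fintype w _ hw0 hw1 (hbF · o) rfl)) hL
  ext k
  refine le_antisymm (le_inf' _ _ fun o _ => sum_smul_tropComb_apply_le F hF hw0 l (hbF · o) k)
    (inf'_le_of_le _ (mem_univ (some k)) (le_of_eq ?_))
  simp only [L, b, Option.elim, Finset.sum_apply, Pi.smul_apply, smul_eq_mul, ← sum_add_distrib,
    ← mul_add]
  exact sum_congr rfl fun i _ => by rw [← ha]; rfl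

theorem tropConvex_setOf_apply_le (i : Fin n) (c : ℝ) : TropConvex {p : Fin n → ℝ | p i ≤ c} :=
  tropConvex_of_forall_min_add_mem fun _ _ _ hy _ _ =>
    show min _ _ ≤ c from (min_le_right _ _).trans hy

theorem tropConvex_setOf_apply_sub_apply_le (i j : Fin n) (c : ℝ) :
    TropConvex {p : Fin n → ℝ | p i - p j ≤ c} := by
  refine tropConvex_of_forall_min_add_mem fun x hx y hy t _ => ?_
  simp only [Set.mem_ofPred_eq] at hx hy ⊢
  rcases min_cases (t + x j) (y j) with ⟨h, -⟩ | ⟨h, -⟩ <;> rw [h]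
  · linarith [min_le_left (t + x i) (y i)]
  · linarith [min_le_right (t + x i) (y i)]

theorem tropConvex_Ici (lo : Fin n → ℝ) : TropConvex (Set.Ici lo) :=
  tropConvex_of_forall_min_add_mem fun _ hx _ hy _ ht j => le_min (by linarith [hx j]) (hy j)

theorem convexHull_tconv_subset {U K : Set (Fin n → ℝ)} (hK : Convex ℝ K) (hKt : TropConvex K)
    (hUK : U ⊆ K) : convexHull ℝ (tconv U) ⊆ K :=
  convexHull_min (tconv_min hKt hUK) hK

theorem exists_mem_tconv_le_convexHull_tconv (F : Finset (Fin n → ℝ)) (hF : F.Nonempty) :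
    ∃ lo ∈ tconv (F : Set (Fin n → ℝ)),
      ∀ p ∈ convexHull ℝ (tconv (F : Set (Fin n → ℝ))), lo ≤ p := by
  refine ⟨tropComb F hF 0 id,
    (tropConvex_tconv _).tropComb_mem hF (fun w hw => subset_tconv _ hw) (inf'_const hF 0),
    fun p hp => convexHull_tconv_subset (convex_Ici _) (tropConvex_Ici _) (fun w hw k => ?_) hp⟩
  exact inf'_le_of_le _ hw (by simp)

theorem exists_mem_tconv_apply_le_and_sub_le (F : Finset (Fin n → ℝ)) (hF : F.Nonempty)
    (i j : Fin n) : ∃ u ∈ tconv (F : Set (Fin n → ℝ)),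
      ∀ p ∈ convexHull ℝ (tconv (F : Set (Fin n → ℝ))), p i ≤ u i ∧ p i - p j ≤ u i - u j := by
  obtain ⟨a, ha, ha_max⟩ := F.exists_max_image (· i) hF
  obtain ⟨d, hd, hd_max⟩ := F.exists_max_image (fun w => w i - w j) hF
  have hu : (fun k => min (0 + a k) ((a i - d i) + d k)) ∈ tconv (F : Set (Fin n → ℝ)) :=
    tropConvex_tconv _ a (subset_tconv _ ha) d (subset_tconv _ hd) 0 _
      (min_eq_left (sub_nonneg.2 (ha_max d hd)))
  refine ⟨_, hu, fun p hp => ⟨?_, ?_⟩⟩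
  · refine convexHull_tconv_subset (convex_halfSpace_le (LinearMap.proj i).isLinear _)
      (tropConvex_setOf_apply_le i _) (fun w hw => ?_) hp
    simpa using ha_max w hw
  · refine convexHull_tconv_subset
      (convex_halfSpace_le (f := fun p : Fin n → ℝ => p i - p j)
        ⟨fun x y => by simp only [Pi.add_apply]; ring, fun c x => by simp [mul_sub]⟩ _)
      (tropConvex_setOf_apply_sub_apply_le i j _) (fun w hw => ?_) hp
    have := min_le_right (0 + a j) (a i - d i + d j)
    simp only [Set.mem_ofPred_eq, zero_add, sub_add_cancel, min_self] at this ⊢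
    linarith [hd_max w hw]

theorem Convex.mem_of_forall_exists_le {E : Type*} [TopologicalSpace E] [AddCommGroup E]
    [Module ℝ E] [IsTopologicalAddGroup E] [ContinuousSMul ℝ E] [LocallyConvexSpace ℝ E]
    {C : Set E} (hC : Convex ℝ C) (hCc : IsClosed C) {z : E}
    (h : ∀ f : StrongDual ℝ E, ∃ b ∈ C, f b ≤ f z) : z ∈ C := by
  by_contra hz
  obtain ⟨f, u, hfz, hfC⟩ := geometric_hahn_banach_point_closed hC hCc hz
  obtain ⟨b, hb, hfb⟩ := h f
  exact (hfz.trans (hfC b hb)).not_ge hfb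

theorem linear_le_of_nonpos_of_nonneg {t x₀ x₁ y₀ y₁ u₀ u₁ z₀ z₁ c₀ c₁ : ℝ} (ht : 0 ≤ t)
    (hc₀ : c₀ ≤ 0) (hc₁ : 0 ≤ c₁) (hyu : y₀ ≤ u₀) (hxu : x₀ - x₁ ≤ u₀ - u₁)
    (hzx : z₀ ≤ t + x₀) (hzy : z₀ ≤ y₀) (hz₁ : z₁ = min (t + x₁) y₁) :
    x₀ * c₀ + x₁ * c₁ ≤ z₀ * c₀ + z₁ * c₁ ∨ y₀ * c₀ + y₁ * c₁ ≤ z₀ * c₀ + z₁ * c₁ ∨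
      u₀ * c₀ + u₁ * c₁ ≤ z₀ * c₀ + z₁ * c₁ := by
  rcases min_cases (t + x₁) y₁ with ⟨h, -⟩ | ⟨h, -⟩ <;> rw [h] at hz₁ <;> subst hz₁
  · rcases le_total 0 (c₀ + c₁) with hc | hc
    · left
      nlinarith [mul_nonneg (sub_nonneg.2 hzx) (neg_nonneg.2 hc₀), mul_nonneg ht hc]
    · right; right
      nlinarith [mul_nonneg (sub_nonneg.2 (hzy.trans hyu)) (neg_nonneg.2 hc),
        mul_nonneg (show 0 ≤ u₀ - u₁ - (z₀ - (t + x₁)) by linarith) hc₁]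
  · right; left
    nlinarith [mul_le_mul_of_nonpos_right hzy hc₀]

theorem min_add_mem_of_isClosed {C : Set (Fin 2 → ℝ)} (hC : Convex ℝ C) (hCc : IsClosed C)
    {x y lo u v : Fin 2 → ℝ} (hx : x ∈ C) (hy : y ∈ C) (hlo : lo ∈ C) (hu : u ∈ C) (hv : v ∈ C)
    (hlox : lo ≤ x) (hloy : lo ≤ y) (hyu : y 0 ≤ u 0) (hxu : x 0 - x 1 ≤ u 0 - u 1)
    (hyv : y 1 ≤ v 1) (hxv : x 1 - x 0 ≤ v 1 - v 0) {t : ℝ} (ht : 0 ≤ t) :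
    (fun j => min (t + x j) (y j)) ∈ C := by
  refine hC.mem_of_forall_exists_le hCc fun f => ?_
  set c : Fin 2 → ℝ := fun i => f fun j => if i = j then 1 else 0
  have hf : ∀ p : Fin 2 → ℝ, f p = p 0 * c 0 + p 1 * c 1 := fun p => by
    simpa [Fin.sum_univ_two] using LinearMap.pi_apply_eq_sum_univ (f : (Fin 2 → ℝ) →ₗ[ℝ] ℝ) p
  simp only [hf]
  have hz : ∀ j, lo j ≤ min (t + x j) (y j) := fun j => le_min (by linarith [hlox j]) (hloy j)
  rcases le_total 0 (c 0) with h₀ | h₀ <;> rcases le_total 0 (c 1) with h₁ | h₁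
  · exact ⟨lo, hlo, add_le_add (mul_le_mul_of_nonneg_right (hz 0) h₀)
      (mul_le_mul_of_nonneg_right (hz 1) h₁)⟩
  · rcases linear_le_of_nonpos_of_nonneg ht h₁ h₀ hyv hxv (min_le_left _ _) (min_le_right _ _)
      rfl with h | h | h
    exacts [⟨x, hx, by linarith⟩, ⟨y, hy, by linarith⟩, ⟨v, hv, by linarith⟩]
  · rcases linear_le_of_nonpos_of_nonneg ht h₀ h₁ hyu hxu (min_le_left _ _) (min_le_right _ _)
      rfl with h | h | h
    exacts [⟨x, hx, h⟩, ⟨y, hy, h⟩, ⟨u, hu, h⟩]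
  · exact ⟨y, hy, add_le_add (mul_le_mul_of_nonpos_right (min_le_right _ _) h₀)
      (mul_le_mul_of_nonpos_right (min_le_right _ _) h₁)⟩

theorem tropConvex_convexHull_tconv (F : Finset (Fin 2 → ℝ)) (hF : F.Nonempty) :
    TropConvex (convexHull ℝ (tconv (F : Set (Fin 2 → ℝ)))) := by
  obtain ⟨lo, hlo, hlo_le⟩ := exists_mem_tconv_le_convexHull_tconv F hF
  obtain ⟨u, hu, hu_le⟩ := exists_mem_tconv_apply_le_and_sub_le F hF 0 1
  obtain ⟨v, hv, hv_le⟩ := exists_mem_tconv_apply_le_and_sub_le F hF 1 0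
  refine tropConvex_of_forall_min_add_mem fun x hx y hy t ht => ?_
  have hx' := hx
  have hy' := hy
  rw [convexHull_eq_union_convexHull_finite_subsets, Set.mem_iUnion₂] at hx' hy'
  obtain ⟨X, hX, hxX⟩ := hx'
  obtain ⟨Y, hY, hyY⟩ := hy'
  set P : Set (Fin 2 → ℝ) := ↑X ∪ ↑Y ∪ {lo, u, v}
  have hP : P ⊆ tconv ↑F :=
    Set.union_subset (Set.union_subset hX hY) (by simp [Set.insert_subset_iff, hlo, hu, hv])
  have hPC : P ⊆ convexHull ℝ P := subset_convexHull ℝ P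
  refine convexHull_mono hP (min_add_mem_of_isClosed (convex_convexHull ℝ P)
    (P.toFinite.isClosed_convexHull ℝ)
    (convexHull_mono (Set.subset_union_left.trans Set.subset_union_left) hxX)
    (convexHull_mono (Set.subset_union_right.trans Set.subset_union_left) hyY)
    (hPC (by simp [P])) (hPC (by simp [P])) (hPC (by simp [P]))
    (hlo_le x hx) (hlo_le y hy) (hu_le y hy).1 (hu_le x hx).2 (hv_le y hy).1 (hv_le x hx).2 ht)

theorem tconv_convexHull_comm_finite_R2 (V : Set (Fin 2 → ℝ)) (hV : V.Finite) :
    tconv (convexHull ℝ V) = convexHull ℝ (tconv V) := by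
  lift V to Finset (Fin 2 → ℝ) using hV with F
  rcases F.eq_empty_or_nonempty with rfl | hF
  · simp [tconv_empty]
  refine (tconv_min (tropConvex_convexHull_tconv F hF)
    (convexHull_mono (subset_tconv _))).antisymm ?_
  exact (convexHull_mono (tconv_min (tropConvex_tropSpan F hF) (subset_tropSpan F hF))).trans
    (convexHull_tropSpan_subset F hF)
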